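/- For every R > 0 and every θ ∈ (0, 1], the set B(A', θ/4) ∩ {x ∈ ℝ^d : x₂ > 0} is contained in {x ∈ ℝ^d : ⟨x, B₀⟩ > 0 > ⟨x, B_θ⟩}, where B(A', θ/4) denotes the open Euclidean ball of center A' and radius θ/4. -/

import Mathlib

open MeasureTheory Metric

lemma coord_le_norm {d : ℕ} (v : EuclideanSpace ℝ (Fin d)) (i : Fin d) :
    |v i| ≤ ‖v‖ := by
  have h := norm_inner_le_norm (𝕜 := ℝ) v (EuclideanSpace.single i (1 : ℝ))
  simpa [EuclideanSpace.inner_single_right, Real.norm_eq_abs] using h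

/-- For every `R > 0` and `θ ∈ (0,1]`, the set `B(A', θ/4) ∩ {x₂ > 0}` is contained in
`{x : ⟨x, B₀⟩ > 0 > ⟨x, B_θ⟩}`, where `B_θ = (R sin θ, R cos θ, 0, …, 0)`. -/
theorem stmt2 (d : ℕ) (hd : 2 ≤ d) (R : ℝ) (hR : 0 < R)
    (A' : EuclideanSpace ℝ (Fin d))
    (hA' : A' = EuclideanSpace.single (⟨0, by omega⟩ : Fin d) (-1 : ℝ))
    (B : ℝ → EuclideanSpace ℝ (Fin d))
    (hB : ∀ t : ℝ, B t =
      EuclideanSpace.single (⟨0, by omega⟩ : Fin d) (R * Real.sin t) +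
      EuclideanSpace.single (⟨1, by omega⟩ : Fin d) (R * Real.cos t))
    (θ : ℝ) (hθ : θ ∈ Set.Ioc (0 : ℝ) 1) :
    ball A' (θ / 4) ∩ {x : EuclideanSpace ℝ (Fin d) | 0 < x ⟨1, by omega⟩} ⊆
      {x : EuclideanSpace ℝ (Fin d) |
        0 < (inner ℝ x (B 0) : ℝ) ∧ (inner ℝ x (B θ) : ℝ) < 0} := by
  obtain ⟨hθ0, hθ1⟩ := hθ
  rintro x ⟨hxball, hx2⟩
  set i0 : Fin d := ⟨0, by omega⟩
  set i1 : Fin d := ⟨1, by omega⟩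
  simp only [Set.mem_setOf_eq] at hx2 ⊢
  have hinner : ∀ t : ℝ, (inner ℝ x (B t) : ℝ)
      = R * Real.sin t * x i0 + R * Real.cos t * x i1 := by
    intro t
    rw [hB t, inner_add_right, EuclideanSpace.inner_single_right,
      EuclideanSpace.inner_single_right]
    simp [mul_comm]
  -- coordinate bounds
  have hdist : dist x A' < θ / 4 := mem_ball.mp hxball
  have h0 : |x i0 - A' i0| ≤ dist x A' := by
    have := coord_le_norm (x - A') i0
    simpa [dist_eq_norm] using this
  have h1 : |x i1 - A' i1| ≤ dist x A' := by
    have := coord_le_norm (x - A') i1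
    simpa [dist_eq_norm] using this
  have hA0 : A' i0 = -1 := by simp [hA', i0]
  have hA1 : A' i1 = 0 := by
    rw [hA']
    have : i1 ≠ i0 := by simp [i0, i1, Fin.ext_iff]
    simp [this]
  rw [hA0] at h0
  rw [hA1] at h1
  have hx0 : x i0 < -1 + θ / 4 := by
    have := abs_lt.mp (lt_of_le_of_lt h0 hdist)
    linarith [this.2]
  have hx1 : x i1 < θ / 4 := by
    have := abs_lt.mp (lt_of_le_of_lt h1 hdist)
    linarith [this.2]
  constructor
  · rw [hinner 0]
    simp only [Real.sin_zero, Real.cos_zero, mul_zero, zero_mul, zero_add, mul_one]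
    positivity
  · rw [hinner θ]
    have hsin : θ - θ ^ 3 / 4 < Real.sin θ := by
      have := Real.sin_gt_sub_cube hθ0
      linarith [pow_pos hθ0 3]
    have hθ3 : θ ^ 3 ≤ θ := by nlinarith [mul_pos hθ0 hθ0, sq_nonneg θ]
    have hsinpos : 0 < Real.sin θ := by linarith
    have hcos1 : Real.cos θ ≤ 1 := Real.cos_le_one θ
    have hcospos : 0 < Real.cos θ := Real.cos_pos_of_mem_Ioo
      ⟨by linarith [Real.pi_gt_three], by linarith [Real.pi_gt_three]⟩
    have key : Real.sin θ * x i0 + Real.cos θ * x i1 < 0 := by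
      have h1' : Real.sin θ * x i0 < Real.sin θ * (-1 + θ / 4) := by
        exact (mul_lt_mul_iff_right₀ hsinpos).mpr hx0
      have h2' : Real.cos θ * x i1 ≤ x i1 := by
        nlinarith
      have hsin34 : 3 * θ / 4 < Real.sin θ := by linarith
      nlinarith
    nlinarith
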